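/- arXiv:1709.07708 — 6 statements merged into one kernel-verified Lean document; each statement's English description precedes it below -/
import Mathlib

section
/- Let n ≥ 2 and k ≥ 2, and let G = F_n / γ_k(F_n) be the free nilpotent group of rank n and class k−1, i.e., the quotient of the free group F_n on n generators by the k-th term of its lower central series (with γ_1(F_n) = F_n). Let H = Aut(G) act on G in the natural way. Then the derivative subgroup D_H(G) = [G, H], namely the subgroup of G generated by all elements g⁻¹ · φ(g) with g ∈ G and φ ∈ Aut(G), is equal to the whole group G. -/
/-!
The transvection `xᵢ ↦ xᵢ xⱼ` (`i ≠ j`) is an automorphism of the free group, and it descends to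
every quotient by a characteristic subgroup, such as `Fₙ/γₖ(Fₙ)`. Since
`xⱼ = xᵢ⁻¹ · (xᵢ xⱼ)`, every generator `xⱼ` is of the form `g⁻¹ φ(g)`, so `[G, Aut G]` contains a
generating set of `G`.
-/

def derivativeSubgroup (G H : Type*) [Group G] [SMul H G] : Subgroup G :=
  Subgroup.closure {x | ∃ (g : G) (h : H), x = g⁻¹ * h • g}

theorem derivativeSubgroup_mulAut_map_mk'_le {G : Type*} [Group G] (N : Subgroup G)
    [hN : N.Characteristic] :
    (derivativeSubgroup G (MulAut G)).map (QuotientGroup.mk' N) ≤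
      derivativeSubgroup (G ⧸ N) (MulAut (G ⧸ N)) := by
  rw [derivativeSubgroup, MonoidHom.map_closure]
  refine Subgroup.closure_mono ?_
  rintro _ ⟨_, ⟨g, φ, rfl⟩, rfl⟩
  exact ⟨g, QuotientGroup.congr N N φ (Subgroup.characteristic_iff_map_eq.1 hN φ), rfl⟩

namespace FreeGroup

variable {α : Type*}

section Transvection

variable [DecidableEq α]

def transvectionHom (i j : α) (z : ℤ) : FreeGroup α →* FreeGroup α :=
  lift (Function.update of i (of i * of j ^ z))

theorem transvectionHom_comp_neg {i j : α} (hij : i ≠ j) (z : ℤ) :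
    (transvectionHom i j z).comp (transvectionHom i j (-z)) = MonoidHom.id _ := by
  ext t
  rcases eq_or_ne t i with rfl | ht
  · simp [transvectionHom, hij.symm, mul_assoc]
  · simp [transvectionHom, ht]

def transvection {i j : α} (hij : i ≠ j) : MulAut (FreeGroup α) :=
  (transvectionHom i j 1).toMulEquiv (transvectionHom i j (-1))
    (by simpa using transvectionHom_comp_neg hij (-1)) (transvectionHom_comp_neg hij 1)

theorem transvection_of_self {i j : α} (hij : i ≠ j) :
    transvection hij (of i) = of i * of j := by
  simp [transvection, transvectionHom]

end Transvection

theorem derivativeSubgroup_mulAut_eq_top [Nontrivial α] :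
    derivativeSubgroup (FreeGroup α) (MulAut (FreeGroup α)) = ⊤ := by
  classical
  refine eq_top_iff.2 ((closure_range_of α).symm.le.trans (Subgroup.closure_mono ?_))
  rintro _ ⟨j, rfl⟩
  obtain ⟨i, hij⟩ := exists_ne j
  exact ⟨of i, transvection hij, by simp [MulAut.smul_def, transvection_of_self]⟩

end FreeGroup

theorem derivativeSubgroup_mulAut_quotient_freeGroup_eq_top {α : Type*} [Nontrivial α]
    (N : Subgroup (FreeGroup α)) [N.Characteristic] :
    derivativeSubgroup (FreeGroup α ⧸ N) (MulAut (FreeGroup α ⧸ N)) = ⊤ := by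
  refine eq_top_iff.2 (le_trans ?_ (derivativeSubgroup_mulAut_map_mk'_le N))
  rw [FreeGroup.derivativeSubgroup_mulAut_eq_top,
    Subgroup.map_top_of_surjective _ (QuotientGroup.mk'_surjective N)]

theorem derivative_subgroup_of_aut_free_nilpotent_eq_top_general (n k : ℕ) (hn : 2 ≤ n) :
    Subgroup.closure
      {x : FreeGroup (Fin n) ⧸ (⊤ : Subgroup (FreeGroup (Fin n))).lowerCentralSeries (k - 1) |
        ∃ (g : FreeGroup (Fin n) ⧸ (⊤ : Subgroup (FreeGroup (Fin n))).lowerCentralSeries (k - 1))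
          (φ : MulAut (FreeGroup (Fin n) ⧸ (⊤ : Subgroup (FreeGroup (Fin n))).lowerCentralSeries (k - 1))),
          x = g⁻¹ * φ g} = ⊤ := by
  have : Nontrivial (Fin n) := Fin.nontrivial_iff_two_le.mpr hn
  exact derivativeSubgroup_mulAut_quotient_freeGroup_eq_top _

/-- Let `G = Fₙ/γₖ(Fₙ)` (`n ≥ 2`, `k ≥ 2`) be the free nilpotent group of rank `n`
and class `k - 1`, where `γ₁(Fₙ) = Fₙ`, so that `γₖ(Fₙ)` is `lowerCentralSeries Fₙ (k-1)`
in Mathlib's indexing. Then the derivative subgroup `D_{Aut G}(G) = [G, Aut G]`,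
generated by all `g⁻¹ * φ g` with `g ∈ G`, `φ ∈ Aut G`, is the whole group `G`. -/
theorem derivative_subgroup_of_aut_free_nilpotent_eq_top (n k : ℕ) (hn : 2 ≤ n) (hk : 2 ≤ k) :
    Subgroup.closure
      {x : FreeGroup (Fin n) ⧸ (⊤ : Subgroup (FreeGroup (Fin n))).lowerCentralSeries (k - 1) |
        ∃ (g : FreeGroup (Fin n) ⧸ (⊤ : Subgroup (FreeGroup (Fin n))).lowerCentralSeries (k - 1))
          (φ : MulAut (FreeGroup (Fin n) ⧸ (⊤ : Subgroup (FreeGroup (Fin n))).lowerCentralSeries (k - 1))),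
          x = g⁻¹ * φ g} = ⊤ :=
  derivative_subgroup_of_aut_free_nilpotent_eq_top_general n k hn
end

section
/- Let G and H be groups and let φ : G →* H and ψ : H →* G be homomorphisms such that for all x ∈ G, x⁻¹ · ψ(φ(x)) lies in the second hypercenter ζ₂(G) (the second term of the upper central series of G) and for all y ∈ H, y⁻¹ · φ(ψ(y)) lies in ζ₂(H). Define the action of H on G by x^y := ψ(y)⁻¹ x ψ(y) and the action of G on H by y^x := φ(x)⁻¹ y φ(x). Then these actions are compatible, i.e., for all x, x₁ ∈ G and y, y₁ ∈ H: x^{(y^{x₁})} = ((x^{x₁⁻¹})^y)^{x₁} and y^{(x^{y₁})} = ((y^{y₁⁻¹})^x)^{y₁}. -/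
/-!
Write `ψ (φ x₁) = x₁ * z` with `z ∈ ζ₂(G)`. Then
`ψ ((φ x₁)⁻¹ * y * φ x₁) = z⁻¹ * (x₁⁻¹ * ψ y * x₁) * z`, and since `z⁻¹ * v * z * v⁻¹ = ⁅z⁻¹, v⁆`
is central, conjugating by `z⁻¹ * v * z` is the same as conjugating by `v`. This gives the first
identity; the second is the same statement with the roles of `(G, φ)` and `(H, ψ)` exchanged.
-/

section

variable {G : Type*} [Group G]

theorem conj_eq_conj_of_mul_inv_mem_center {a b : G} (h : a * b⁻¹ ∈ Subgroup.center G) (x : G) :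
    a⁻¹ * x * a = b⁻¹ * x * b := by
  have hcomm : a * b⁻¹ * x = x * (a * b⁻¹) := (Subgroup.mem_center_iff.mp h x).symm
  calc a⁻¹ * x * a = b⁻¹ * (a * b⁻¹)⁻¹ * (x * (a * b⁻¹)) * b := by group
    _ = b⁻¹ * x * b := by rw [← hcomm]; group

theorem conj_conj_eq_conj_of_mem_upperCentralSeries_two {z : G}
    (hz : z ∈ Subgroup.upperCentralSeries G 2) (v x : G) :
    (z⁻¹ * v * z)⁻¹ * x * (z⁻¹ * v * z) = v⁻¹ * x * v := by
  have hcenter : z⁻¹ * v * z * v⁻¹ ∈ Subgroup.center G := by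
    have h := Subgroup.mem_upperCentralSeries_succ_iff.mp (inv_mem hz) v
    rwa [Subgroup.upperCentralSeries_one, commutatorElement_def, inv_inv] at h
  exact conj_eq_conj_of_mul_inv_mem_center hcenter x

end

theorem conj_map_conj_eq_of_mem_upperCentralSeries_two {G H : Type*} [Group G] [Group H]
    (ψ : H →* G) {h : H} {x₁ : G} (hx₁ : x₁⁻¹ * ψ h ∈ Subgroup.upperCentralSeries G 2)
    (x : G) (y : H) :
    (ψ (h⁻¹ * y * h))⁻¹ * x * ψ (h⁻¹ * y * h) =
      x₁⁻¹ * ((ψ y)⁻¹ * (x₁ * x * x₁⁻¹) * ψ y) * x₁ := by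
  have hψ : ψ (h⁻¹ * y * h) =
      (x₁⁻¹ * ψ h)⁻¹ * (x₁⁻¹ * ψ y * x₁) * (x₁⁻¹ * ψ h) := by
    simp only [map_mul, map_inv]
    group
  rw [hψ, conj_conj_eq_conj_of_mem_upperCentralSeries_two hx₁]
  group

/-- If `φ : G →* H` and `ψ : H →* G` satisfy `x ≡ ψ(φ(x)) mod ζ₂(G)` and
`y ≡ φ(ψ(y)) mod ζ₂(H)`, then the actions `x^y := ψ(y)⁻¹ x ψ(y)` of `H` on `G` and
`y^x := φ(x)⁻¹ y φ(x)` of `G` on `H` are compatible, i.e. the Brown–Loday identities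
`x^(y^x₁) = ((x^x₁⁻¹)^y)^x₁` and `y^(x^y₁) = ((y^y₁⁻¹)^x)^y₁` hold. -/
theorem compatible_of_hypercenter_congr {G H : Type*} [Group G] [Group H]
    (φ : G →* H) (ψ : H →* G)
    (hG : ∀ x : G, x⁻¹ * ψ (φ x) ∈ upperCentralSeries G 2)
    (hH : ∀ y : H, y⁻¹ * φ (ψ y) ∈ upperCentralSeries H 2) :
    (∀ (x x₁ : G) (y : H),
        (ψ ((φ x₁)⁻¹ * y * φ x₁))⁻¹ * x * ψ ((φ x₁)⁻¹ * y * φ x₁) =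
          x₁⁻¹ * ((ψ y)⁻¹ * (x₁ * x * x₁⁻¹) * ψ y) * x₁) ∧
    (∀ (y y₁ : H) (x : G),
        (φ ((ψ y₁)⁻¹ * x * ψ y₁))⁻¹ * y * φ ((ψ y₁)⁻¹ * x * ψ y₁) =
          y₁⁻¹ * ((φ x)⁻¹ * (y₁ * y * y₁⁻¹) * φ x) * y₁) :=
  ⟨fun x x₁ y => conj_map_conj_eq_of_mem_upperCentralSeries_two ψ (hG x₁) x y,
    fun y y₁ x => conj_map_conj_eq_of_mem_upperCentralSeries_two φ (hH y₁) y x⟩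
end

section
/- Let G and H be nilpotent groups of class at most 2 (i.e., ζ₂(G) = G and ζ₂(H) = H, where ζ₂ denotes the second term of the upper central series). Then for ANY pair of homomorphisms φ : G →* H and ψ : H →* G, the actions x^y := ψ(y)⁻¹ x ψ(y) of H on G and y^x := φ(x)⁻¹ y φ(x) of G on H are compatible, i.e., for all x, x₁ ∈ G and y, y₁ ∈ H: x^{(y^{x₁})} = ((x^{x₁⁻¹})^y)^{x₁} and y^{(x^{y₁})} = ((y^{y₁⁻¹})^x)^{y₁}. -/
lemma conj_eq_of_comm_center {G : Type*} [Group G]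
    (hc : ∀ a b : G, a * b * a⁻¹ * b⁻¹ ∈ Subgroup.center G) (s a b x : G) :
    (a⁻¹ * s * a)⁻¹ * x * (a⁻¹ * s * a) = b⁻¹ * (s⁻¹ * (b * x * b⁻¹) * s) * b := by
  have h1 := hc b⁻¹ s
  have h2 := hc s a⁻¹
  rw [inv_inv] at h1 h2
  have hz : (b⁻¹ * s * b * s⁻¹) * (s * a⁻¹ * s⁻¹ * a) ∈ Subgroup.center G :=
    Subgroup.mul_mem _ h1 h2
  have key : ∀ g : G, g * ((b⁻¹ * s * b * s⁻¹) * (s * a⁻¹ * s⁻¹ * a)) =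
      ((b⁻¹ * s * b * s⁻¹) * (s * a⁻¹ * s⁻¹ * a)) * g :=
    fun g => (Subgroup.mem_center_iff.mp hz) g
  calc (a⁻¹ * s * a)⁻¹ * x * (a⁻¹ * s * a)
      = (b⁻¹ * s * b)⁻¹ * (((b⁻¹ * s * b * s⁻¹) * (s * a⁻¹ * s⁻¹ * a)) * x) *
        (a⁻¹ * s * a) := by group
    _ = (b⁻¹ * s * b)⁻¹ * (x * ((b⁻¹ * s * b * s⁻¹) * (s * a⁻¹ * s⁻¹ * a))) *
        (a⁻¹ * s * a) := by rw [key]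
    _ = b⁻¹ * (s⁻¹ * (b * x * b⁻¹) * s) * b := by group

lemma comm_center_of_ucs_two {G : Type*} [Group G] (hG : upperCentralSeries G 2 = ⊤) :
    ∀ a b : G, a * b * a⁻¹ * b⁻¹ ∈ Subgroup.center G := by
  intro a b
  have ha : a ∈ upperCentralSeries G 2 := hG ▸ Subgroup.mem_top a
  have := (mem_upperCentralSeries_succ_iff).mp ha b
  rwa [upperCentralSeries_one] at this

/-- If `G` and `H` are nilpotent of class at most 2 (`ζ₂(G) = G`, `ζ₂(H) = H`),
then ANY pair of homomorphisms `φ : G →* H`, `ψ : H →* G` gives compatible actions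
`x^y := ψ(y)⁻¹ x ψ(y)` and `y^x := φ(x)⁻¹ y φ(x)`, i.e. the Brown–Loday identities
`x^(y^x₁) = ((x^x₁⁻¹)^y)^x₁` and `y^(x^y₁) = ((y^y₁⁻¹)^x)^y₁` hold. -/
theorem compatible_of_nilpotent_class_two {G H : Type*} [Group G] [Group H]
    (hG : upperCentralSeries G 2 = ⊤) (hH : upperCentralSeries H 2 = ⊤)
    (φ : G →* H) (ψ : H →* G) :
    (∀ (x x₁ : G) (y : H),
        (ψ ((φ x₁)⁻¹ * y * φ x₁))⁻¹ * x * ψ ((φ x₁)⁻¹ * y * φ x₁) =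
          x₁⁻¹ * ((ψ y)⁻¹ * (x₁ * x * x₁⁻¹) * ψ y) * x₁) ∧
    (∀ (y y₁ : H) (x : G),
        (φ ((ψ y₁)⁻¹ * x * ψ y₁))⁻¹ * y * φ ((ψ y₁)⁻¹ * x * ψ y₁) =
          y₁⁻¹ * ((φ x)⁻¹ * (y₁ * y * y₁⁻¹) * φ x) * y₁) := by
  constructor
  · intro x x₁ y
    have : ψ ((φ x₁)⁻¹ * y * φ x₁) = (ψ (φ x₁))⁻¹ * ψ y * ψ (φ x₁) := by
      simp [map_mul]
    rw [this]
    exact conj_eq_of_comm_center (comm_center_of_ucs_two hG) (ψ y) (ψ (φ x₁)) x₁ x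
  · intro y y₁ x
    have : φ ((ψ y₁)⁻¹ * x * ψ y₁) = (φ (ψ y₁))⁻¹ * φ x * φ (ψ y₁) := by
      simp [map_mul]
    rw [this]
    exact conj_eq_of_comm_center (comm_center_of_ucs_two hH) (φ x) (φ (ψ y₁)) y₁ y
end

section
/- Let G = H be the free group of rank 2 with basis x₁, x₂ (respectively y₁, y₂), let φ : G →* H be the isomorphism sending x₁ ↦ y₁, x₂ ↦ y₂, and let ψ : H →* G be the trivial homomorphism sending y₁ ↦ 1, y₂ ↦ 1. Then the actions x^y := ψ(y)⁻¹ x ψ(y) of H on G and y^x := φ(x)⁻¹ y φ(x) of G on H are NOT compatible; in particular y₂^{x₁} = y₁⁻¹ y₂ y₁ ≠ y₂, whence the compatibility identity y^{(x^{y₁})} = ((y^{y₁⁻¹})^x)^{y₁} fails. -/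
/-- For the free group of rank 2, the identity homomorphism `φ = id` and the trivial
homomorphism `ψ = 1` do NOT give compatible actions `x^y := ψ(y)⁻¹ x ψ(y)` and
`y^x := φ(x)⁻¹ y φ(x)`: indeed `y₂^{x₁} = y₁⁻¹ y₂ y₁ ≠ y₂`, and the Brown–Loday
compatibility identity `y^(x^y₁) = ((y^y₁⁻¹)^x)^y₁` fails. -/
theorem free_group_actions_not_compatible
    (φ ψ : FreeGroup (Fin 2) →* FreeGroup (Fin 2))
    (hφ : φ = MonoidHom.id (FreeGroup (Fin 2))) (hψ : ψ = 1) :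
    ((φ (FreeGroup.of 0))⁻¹ * FreeGroup.of 1 * φ (FreeGroup.of 0) ≠ FreeGroup.of 1) ∧
    ¬ ((∀ (x x₁ : FreeGroup (Fin 2)) (y : FreeGroup (Fin 2)),
          (ψ ((φ x₁)⁻¹ * y * φ x₁))⁻¹ * x * ψ ((φ x₁)⁻¹ * y * φ x₁) =
            x₁⁻¹ * ((ψ y)⁻¹ * (x₁ * x * x₁⁻¹) * ψ y) * x₁) ∧
        (∀ (y y₁ : FreeGroup (Fin 2)) (x : FreeGroup (Fin 2)),
          (φ ((ψ y₁)⁻¹ * x * ψ y₁))⁻¹ * y * φ ((ψ y₁)⁻¹ * x * ψ y₁) =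
            y₁⁻¹ * ((φ x)⁻¹ * (y₁ * y * y₁⁻¹) * φ x) * y₁)) := by
  subst hφ hψ
  simp only [MonoidHom.id_apply, MonoidHom.one_apply, inv_one, one_mul, mul_one]
  constructor
  · decide
  · rintro ⟨-, h2⟩
    have := h2 (FreeGroup.of 0) (FreeGroup.of 1) (FreeGroup.of 0)
    revert this
    decide
end

section
/- Let G be a group and let ψ ∈ Aut(G) be an automorphism with ψ² = id. Let the cyclic group Z₂ = ⟨φ⟩ of order 2 act on G via α : Z₂ →* Aut(G) with α(φ) = ψ, and let G act trivially on Z₂. Then this pair of actions is compatible if and only if for every g ∈ G the element c(g) := g⁻¹ · ψ(g) lies in the center of G and satisfies ψ(c(g)) = c(g)⁻¹. -/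
/-- The Brown–Loday compatibility condition for a pair of mutual actions,
encoded by homomorphisms `α : H →* MulAut G` and `β : G →* MulAut H`
(so `g^h := α h g` and `h^g := β g h`, with conjugation `x^y = y⁻¹ x y`). -/
def Compatible {G H : Type*} [Group G] [Group H]
    (α : H →* MulAut G) (β : G →* MulAut H) : Prop :=
  (∀ (g g₁ : G) (h : H), α (β g₁ h) g = g₁⁻¹ * α h (g₁ * g * g₁⁻¹) * g₁) ∧
  (∀ (h h₁ : H) (g : G), β (α h₁ g) h = h₁⁻¹ * β g (h₁ * h * h₁⁻¹) * h₁)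

/-- Let `ψ` be an automorphism of `G` of order dividing 2 and let `Z₂ = ⟨φ⟩` act on `G`
via `α` with `α φ = ψ`, while `G` acts trivially on `Z₂`. Then this pair of actions is
compatible iff for every `g`, the element `c(g) := g⁻¹ * ψ g` is central and
`ψ (c g) = (c g)⁻¹`. -/
theorem compatible_z2_iff {G : Type*} [Group G] (ψ : MulAut G) (hψ : ψ * ψ = 1)
    (α : Multiplicative (ZMod 2) →* MulAut G)
    (hα : α (Multiplicative.ofAdd 1) = ψ) :
    Compatible α (1 : G →* MulAut (Multiplicative (ZMod 2))) ↔
      ∀ g : G, g⁻¹ * ψ g ∈ Subgroup.center G ∧ ψ (g⁻¹ * ψ g) = (g⁻¹ * ψ g)⁻¹ := by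
  have hψ2 : ∀ x : G, ψ (ψ x) = x := fun x => by
    rw [← MulAut.mul_apply, hψ]; rfl
  have hcases : ∀ h : Multiplicative (ZMod 2), h = 1 ∨ h = Multiplicative.ofAdd 1 := by
    decide
  have hfree : ∀ g : G, ψ (g⁻¹ * ψ g) = (g⁻¹ * ψ g)⁻¹ := fun g => by
    rw [map_mul, map_inv, hψ2, mul_inv_rev, inv_inv]
  constructor
  · rintro ⟨h1, -⟩ g
    refine ⟨?_, hfree g⟩
    have key : ∀ g' : G, ψ g' = g⁻¹ * (ψ g * ψ g' * (ψ g)⁻¹) * g := fun g' => by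
      have := h1 g' g (Multiplicative.ofAdd 1)
      simpa [hα, map_mul, map_inv, mul_assoc] using this
    rw [Subgroup.mem_center_iff]
    intro x
    have hx : x = g⁻¹ * (ψ g * x * (ψ g)⁻¹) * g := by
      have := key (ψ x); rwa [hψ2] at this
    conv_lhs => rw [hx]
    group
  · intro hc
    constructor
    · intro g g₁ h
      have hb : (1 : G →* MulAut (Multiplicative (ZMod 2))) g₁ h = h := rfl
      rw [hb]
      rcases hcases h with rfl | rfl
      · simp only [map_one, MulAut.one_apply]; group
      · rw [hα]
        have hcen := (Subgroup.mem_center_iff.mp (hc g₁).1) (ψ g)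
        -- hcen : ψ g * (g₁⁻¹ * ψ g₁) = g₁⁻¹ * ψ g₁ * ψ g
        have h4 : ψ g₁ * ψ g * (ψ g₁)⁻¹ = g₁ * ψ g * g₁⁻¹ := by
          calc ψ g₁ * ψ g * (ψ g₁)⁻¹
              = g₁ * ((g₁⁻¹ * ψ g₁) * ψ g) * (ψ g₁)⁻¹ := by group
            _ = g₁ * (ψ g * (g₁⁻¹ * ψ g₁)) * (ψ g₁)⁻¹ := by rw [hcen]
            _ = g₁ * ψ g * g₁⁻¹ := by group
        rw [map_mul, map_mul, map_inv, h4]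
        group
    · intro h h₁ g
      have hb : ∀ (x : G) (k : Multiplicative (ZMod 2)),
          (1 : G →* MulAut (Multiplicative (ZMod 2))) x k = k := fun _ _ => rfl
      rw [hb, hb]
      group
end

section
/- Let G be a group with trivial center and let ψ ∈ Aut(G) be an automorphism with ψ² = id such that the action of Z₂ = ⟨φ⟩ on G via α(φ) = ψ, together with the trivial action of G on Z₂, is a compatible pair of actions. Then ψ is the identity automorphism of G. -/
/-- If `G` has trivial center, `ψ` is an automorphism of `G` with `ψ² = id`, and the
action of `Z₂ = ⟨φ⟩` on `G` via `α φ = ψ` together with the trivial action of `G` on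
`Z₂` is compatible, then `ψ` is the identity automorphism. -/
theorem z2_compatible_trivial_center {G : Type*} [Group G]
    (hZ : Subgroup.center G = ⊥) (ψ : MulAut G) (hψ : ψ * ψ = 1)
    (α : Multiplicative (ZMod 2) →* MulAut G)
    (hα : α (Multiplicative.ofAdd 1) = ψ)
    (hcomp : Compatible α (1 : G →* MulAut (Multiplicative (ZMod 2)))) :
    ψ = 1 := by
  obtain ⟨h1, -⟩ := hcomp
  -- specialize to h = ofAdd 1
  have key : ∀ g g₁ : G, ψ g = g₁⁻¹ * ψ (g₁ * g * g₁⁻¹) * g₁ := by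
    intro g g₁
    have := h1 g g₁ (Multiplicative.ofAdd 1)
    simpa [hα] using this
  ext g₁
  have hc : ∀ g : G, ((ψ g₁)⁻¹ * g₁) * ψ g = ψ g * ((ψ g₁)⁻¹ * g₁) := by
    intro g
    have h : ψ g = g₁⁻¹ * (ψ g₁ * ψ g * (ψ g₁)⁻¹) * g₁ := by
      simpa [map_mul] using key g g₁
    have h' : g₁ * ψ g * g₁⁻¹ = ψ g₁ * ψ g * (ψ g₁)⁻¹ := by
      conv_lhs => rw [h]
      group
    calc ((ψ g₁)⁻¹ * g₁) * ψ g = (ψ g₁)⁻¹ * (g₁ * ψ g * g₁⁻¹) * g₁ := by group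
      _ = (ψ g₁)⁻¹ * (ψ g₁ * ψ g * (ψ g₁)⁻¹) * g₁ := by rw [h']
      _ = ψ g * ((ψ g₁)⁻¹ * g₁) := by group
  have hmem : ((ψ g₁)⁻¹ * g₁) ∈ Subgroup.center G := by
    rw [Subgroup.mem_center_iff]
    intro g
    obtain ⟨g', rfl⟩ := ψ.surjective g
    exact (hc g').symm
  rw [hZ, Subgroup.mem_bot] at hmem
  have : ψ g₁ = g₁ := by
    have := inv_mul_eq_one.mp hmem
    exact this
  simpa using this
end
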